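/- arXiv:math/0310410 — 4 statements merged into one kernel-verified Lean document; each statement's English description precedes it below -/
import Mathlib

section
/- Let R be a commutative ring, (u_i) elements with u_i − u_j invertible for i ≠ j, (r_{ij}) symmetric, v_{ij} := (u_j − u_i) r_{ij}, and θ_{ij} := (u_j − u_i)^{-1}(r_{ij} + Σ_k r_{ik} v_{jk}) for i ≠ j. Then for every integer m ≥ 0 and all i ≠ j: u_i^{m+1} θ_{ij} + u_j^{m+1} θ_{ji} = − r_{ij} Σ_{p=0}^{m} u_i^p u_j^{m−p} − Σ_k r_{ik} r_{jk} ( u_j^{m+1} + (u_k − u_j) Σ_{p=0}^{m} u_i^p u_j^{m−p} ). -/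
/-!
Write `S = ∑_{p ≤ m} u_i^p u_j^{m-p}`, so that `u_i^{m+1} - u_j^{m+1} = (u_i - u_j) S`. Then
`u_i^{m+1} θ_{ij} + u_j^{m+1} θ_{ji} = u_j^{m+1} (θ_{ij} + θ_{ji}) - S (u_j - u_i) θ_{ij}`,
and both terms are polynomial: the first by `θ_{ij} + θ_{ji} = -∑_k r_{ik} r_{jk}`, the second by
the defining relation of `θ_{ij}`.
-/

open Finset

section RotationCoefficients

variable {R ι : Type*} [CommRing R] [Fintype ι] {u : ι → R} {r v : ι → ι → R}

theorem pow_succ_sub_pow_succ_eq_mul_sum (a b : R) (m : ℕ) :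
    a ^ (m + 1) - b ^ (m + 1) = (a - b) * ∑ p ∈ range (m + 1), a ^ p * b ^ (m - p) := by
  rw [← geom_sum₂_mul, mul_comm]
  simp only [Nat.add_sub_cancel]

theorem sum_mul_eq_sum_mul_mul_sub (hv : ∀ i j, v i j = (u j - u i) * r i j) (i j : ι) :
    ∑ k, r i k * v j k = ∑ k, r i k * r j k * (u k - u j) :=
  sum_congr rfl fun k _ => by rw [hv]; ring

theorem theta_add_theta_swap (hr : ∀ i j, r i j = r j i)
    (hv : ∀ i j, v i j = (u j - u i) * r i j) {θ : ι → ι → R} {i j : ι}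
    (hunit : IsUnit (u j - u i))
    (hθij : (u j - u i) * θ i j = r i j + ∑ k, r i k * v j k)
    (hθji : (u i - u j) * θ j i = r j i + ∑ k, r j k * v i k) :
    θ i j + θ j i = -∑ k, r i k * r j k := by
  have hdiff : ∑ k, r i k * v j k - ∑ k, r j k * v i k
      = -((u j - u i) * ∑ k, r i k * r j k) := by
    rw [sum_mul_eq_sum_mul_mul_sub hv, sum_mul_eq_sum_mul_mul_sub hv, mul_sum, ← sum_sub_distrib,
      ← sum_neg_distrib]
    exact sum_congr rfl fun k _ => by ring
  refine hunit.mul_left_cancel ?_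
  linear_combination hθij - hθji + hdiff + hr i j

end RotationCoefficients

/-- First order poles do not appear: the combination
`u_i^{m+1} θ_{ij} + u_j^{m+1} θ_{ji}` is polynomial in the rotation coefficients. -/
theorem stmt5 {R : Type*} [CommRing R] {N : ℕ}
    (u : Fin N → R) (hinv : ∀ i j, i ≠ j → IsUnit (u i - u j))
    (r : Fin N → Fin N → R) (hr : ∀ i j, r i j = r j i)
    (v : Fin N → Fin N → R) (hv : ∀ i j, v i j = (u j - u i) * r i j)
    (θ : Fin N → Fin N → R)
    (hθ : ∀ i j, i ≠ j → (u j - u i) * θ i j = r i j + ∑ k, r i k * v j k) :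
    ∀ (m : ℕ) (i j : Fin N), i ≠ j →
      u i ^ (m + 1) * θ i j + u j ^ (m + 1) * θ j i
        = -(r i j * ∑ p ∈ Finset.range (m + 1), u i ^ p * u j ^ (m - p))
          - ∑ k, r i k * r j k *
              (u j ^ (m + 1) + (u k - u j) * ∑ p ∈ Finset.range (m + 1), u i ^ p * u j ^ (m - p)) := by
  intro m i j hij
  have hgeom := pow_succ_sub_pow_succ_eq_mul_sum (u i) (u j) m
  generalize ∑ p ∈ range (m + 1), u i ^ p * u j ^ (m - p) = S at hgeom ⊢
  have hθij := hθ i j hij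
  have hsum := theta_add_theta_swap hr hv (hinv j i hij.symm) hθij (hθ j i hij.symm)
  rw [sum_mul_eq_sum_mul_mul_sub hv] at hθij
  have hsplit : ∑ k, r i k * r j k * (u j ^ (m + 1) + (u k - u j) * S)
      = u j ^ (m + 1) * ∑ k, r i k * r j k + S * ∑ k, r i k * r j k * (u k - u j) := by
    rw [mul_sum, mul_sum, ← sum_add_distrib]
    exact sum_congr rfl fun k _ => by ring
  calc u i ^ (m + 1) * θ i j + u j ^ (m + 1) * θ j i
      = u j ^ (m + 1) * (θ i j + θ j i) + (u i ^ (m + 1) - u j ^ (m + 1)) * θ i j := by ring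
    _ = -(u j ^ (m + 1) * ∑ k, r i k * r j k) - S * ((u j - u i) * θ i j) := by
        rw [hsum, hgeom]; ring
    _ = _ := by rw [hθij, hsplit]; ring
end

section
/- Let R be a commutative ring, D: R → R a derivation, and let u_1, ..., u_N, r_{ij} ∈ R with r symmetric, satisfying D u_i = − u_i^2 for all i, and D r_{ij} = (15/4) δ_{ij} + (u_i + u_j) r_{ij} − Σ_k v_{ik} v_{jk} for all i, j, where v_{ij} := (u_j − u_i) r_{ij}. Then for all i ≠ j: D v_{ij} = (u_i − u_j) Σ_k v_{ik} v_{jk}. -/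
/-- The term `(b - a) (a + b) c` coming from `D c` cancels `D (b - a) · c = (a² - b²) c`. -/
theorem Derivation.map_sub_mul_of_map_eq_neg_sq {S R : Type*} [CommRing S] [CommRing R]
    [Algebra S R] (D : Derivation S R R) {a b c s : R}
    (ha : D a = -a ^ 2) (hb : D b = -b ^ 2) (hc : D c = (a + b) * c - s) :
    D ((b - a) * c) = (a - b) * s := by
  rw [D.leibniz, map_sub, ha, hb, hc, smul_eq_mul, smul_eq_mul]
  ring

theorem stmt8_general {R : Type*} [CommRing R] [Algebra ℚ R] {N : ℕ}
    (D : Derivation ℚ R R)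
    (u : Fin N → R) (r : Fin N → Fin N → R)
    (v : Fin N → Fin N → R) (hv : ∀ i j, v i j = (u j - u i) * r i j)
    (hDu : ∀ i, D (u i) = -(u i ^ 2))
    (hDr : ∀ i j, D (r i j) =
      (if i = j then algebraMap ℚ R (15 / 4) else 0)
        + (u i + u j) * r i j - ∑ k, v i k * v j k) :
    ∀ i j, i ≠ j → D (v i j) = (u i - u j) * ∑ k, v i k * v j k := by
  intro i j hij
  rw [hv i j]
  refine D.map_sub_mul_of_map_eq_neg_sq (hDu i) (hDu j) ?_
  rw [hDr i j, if_neg hij, zero_add]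

/-- Action of the Virasoro vector field `L₁` on `v_{ij}`. -/
theorem stmt8 {R : Type*} [CommRing R] [Algebra ℚ R] {N : ℕ}
    (D : Derivation ℚ R R)
    (u : Fin N → R) (r : Fin N → Fin N → R) (hr : ∀ i j, r i j = r j i)
    (v : Fin N → Fin N → R) (hv : ∀ i j, v i j = (u j - u i) * r i j)
    (hDu : ∀ i, D (u i) = -(u i ^ 2))
    (hDr : ∀ i j, D (r i j) =
      (if i = j then algebraMap ℚ R (15 / 4) else 0)
        + (u i + u j) * r i j - ∑ k, v i k * v j k) :
    ∀ i j, i ≠ j → D (v i j) = (u i - u j) * ∑ k, v i k * v j k :=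
  stmt8_general D u r v hv hDu hDr
end

section
/- Let R be a commutative ℚ-algebra, D: R → R a derivation, u_i ∈ R with u_i − u_j invertible for i ≠ j, r_{ij} symmetric, v_{ij} := (u_j − u_i) r_{ij}, θ_{ij} := (u_j − u_i)^{-1}(r_{ij} + Σ_k r_{ik} v_{jk}) for i ≠ j. Assume D u_i = − u_i^2 and D r_{ij} = (15/4) δ_{ij} + (u_i + u_j) r_{ij} − Σ_k v_{ik} v_{jk}. Then for all i ≠ j: D θ_{ij} = (3 u_i + u_j) θ_{ij} − (11/4) r_{ij} + Σ_{k,l} r_{ik} v_{jl} v_{kl}. -/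
/-!
Differentiate `(u j - u i) * θ i j = r i j + ∑ k, r i k * v j k` with the Leibniz rule. The
derivative of `v a b` is `(u a - u b) * ∑ l, v a l * v b l`, and because `v` is antisymmetric the
two cubic sums `∑ v v v` in the derivative of the right-hand side cancel. What is left is
`u j - u i` times the claimed formula, and `u j - u i` is a unit.
-/

open Finset

theorem sum_mul_sum_add_sum_mul_sum_eq_zero {ι R : Type*} [Fintype ι] [CommRing R]
    {v : ι → ι → R} (hv : ∀ a b, v a b = -v b a) (i j : ι) :
    ∑ k, v i k * ∑ l, v j l * v k l + ∑ k, v j k * ∑ l, v i l * v k l = 0 := by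
  simp only [mul_sum]
  rw [sum_comm (f := fun k l => v j k * (v i l * v k l)), ← sum_add_distrib]
  refine sum_eq_zero fun k _ => ?_
  rw [← sum_add_distrib]
  refine sum_eq_zero fun l _ => ?_
  rw [hv l k]
  ring

section

variable {A R ι : Type*} [CommRing A] [CommRing R] [Algebra A R] [Fintype ι] [DecidableEq ι]
  {D : Derivation A R R} {u : ι → R} {r v : ι → ι → R} {c : R}

theorem derivation_v_eq (hDu : ∀ a, D (u a) = -(u a ^ 2))
    (hDr : ∀ a b, D (r a b) = (if a = b then c else 0) + (u a + u b) * r a b - ∑ k, v a k * v b k)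
    (hv : ∀ a b, v a b = (u b - u a) * r a b) (a b : ι) :
    D (v a b) = (u a - u b) * ∑ l, v a l * v b l := by
  rw [hv a b, D.leibniz, smul_eq_mul, smul_eq_mul, hDr, map_sub, hDu, hDu]
  split_ifs with hab
  · subst hab; ring
  · ring

theorem derivation_sum_r_mul_v_eq (hDu : ∀ a, D (u a) = -(u a ^ 2))
    (hDr : ∀ a b, D (r a b) = (if a = b then c else 0) + (u a + u b) * r a b - ∑ k, v a k * v b k)
    (hr : ∀ a b, r a b = r b a) (hv : ∀ a b, v a b = (u b - u a) * r a b) (i j : ι) :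
    D (∑ k, r i k * v j k) = c * v j i + 2 * u i * ∑ k, r i k * v j k + ∑ k, v i k * v j k
      + (u j - u i) * ∑ k, ∑ l, r i k * v j l * v k l := by
  have hterm : ∀ k, D (r i k * v j k) =
      (if i = k then c * v j k else 0) + 2 * u i * (r i k * v j k) + v i k * v j k
        + (u j - u i) * ∑ l, r i k * v j l * v k l
        - (v i k * ∑ l, v j l * v k l + v j k * ∑ l, v i l * v k l) := by
    intro k
    rw [D.leibniz, smul_eq_mul, smul_eq_mul, derivation_v_eq hDu hDr hv, hDr]
    simp only [mul_assoc, ← mul_sum]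
    split_ifs <;> linear_combination (∑ l, v j l * v k l - v j k) * hv i k
  have hanti : ∀ a b, v a b = -v b a := fun a b => by rw [hv, hv, hr]; ring
  rw [map_sum, sum_congr rfl fun k _ => hterm k]
  simp only [sum_sub_distrib, sum_add_distrib, sum_ite_eq, mem_univ, if_true, ← mul_sum,
    sum_mul_sum_add_sum_mul_sum_eq_zero hanti]
  ring

end

/-- Action of the Virasoro vector field `L₁` on `θ_{ij}`. -/
theorem stmt9 {R : Type*} [CommRing R] [Algebra ℚ R] {N : ℕ}
    (D : Derivation ℚ R R)
    (u : Fin N → R) (hinv : ∀ i j, i ≠ j → IsUnit (u i - u j))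
    (r : Fin N → Fin N → R) (hr : ∀ i j, r i j = r j i)
    (v : Fin N → Fin N → R) (hv : ∀ i j, v i j = (u j - u i) * r i j)
    (θ : Fin N → Fin N → R)
    (hθ : ∀ i j, i ≠ j → (u j - u i) * θ i j = r i j + ∑ k, r i k * v j k)
    (hDu : ∀ i, D (u i) = -(u i ^ 2))
    (hDr : ∀ i j, D (r i j) =
      (if i = j then algebraMap ℚ R (15 / 4) else 0)
        + (u i + u j) * r i j - ∑ k, v i k * v j k) :
    ∀ i j, i ≠ j → D (θ i j) =
      (3 * u i + u j) * θ i j - algebraMap ℚ R (11 / 4) * r i j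
        + ∑ k, ∑ l, r i k * v j l * v k l := by
  intro i j hij
  have hθij := hθ i j hij
  have hDθ : (u j - u i) * D (θ i j) =
      D (r i j + ∑ k, r i k * v j k) + (u j - u i) * (u i + u j) * θ i j := by
    have h := congrArg D hθij
    rw [D.leibniz, smul_eq_mul, smul_eq_mul, map_sub, hDu, hDu] at h
    linear_combination h
  have hconst : algebraMap ℚ R (15 / 4) = algebraMap ℚ R (11 / 4) + 1 := by
    rw [← map_one (algebraMap ℚ R), ← map_add]
    norm_num
  refine (hinv j i hij.symm).mul_left_cancel ?_
  rw [hDθ, map_add, hDr, if_neg hij, derivation_sum_r_mul_v_eq hDu hDr hr hv, hv j i, hr j i]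
  linear_combination (-2 * u i) * hθij + ((u i - u j) * r i j) * hconst
end

section
/- Let R be a commutative ring, (u_i) with u_i − u_j invertible for i ≠ j, (r_{ij}) symmetric, v_{ij} := (u_j − u_i) r_{ij}, θ_{ij} := (u_j − u_i)^{-1}(r_{ij} + Σ_k r_{ik} v_{jk}) for i ≠ j. Then for every integer m ≥ 0 and all i ≠ j: u_j^{m+1} θ_{ij} + u_i^{m+1} θ_{ji} = r_{ij} Σ_{p=0}^{m} u_i^p u_j^{m−p} + Σ_k r_{ik} r_{jk} ( − u_i^{m+1} + (u_k − u_j) Σ_{p=0}^{m} u_i^p u_j^{m−p} ). -/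
/-!
Multiplying by the unit `u j - u i` clears the denominators of `θ i j` and `θ j i` at once (the
denominator of `θ j i` is its negative). After the substitution `v = (u_k - u_i) r`, both sides become
polynomial, and the identity reduces to the telescoping
`(b - a) * ∑_{p ≤ m} a ^ p * b ^ (m - p) = b ^ (m + 1) - a ^ (m + 1)`.
-/

open Finset

section GeomSum

variable {R : Type*} [CommRing R]

lemma sub_mul_geom_sum₂_succ (a b : R) (m : ℕ) :
    (b - a) * ∑ p ∈ range (m + 1), a ^ p * b ^ (m - p) = b ^ (m + 1) - a ^ (m + 1) := by
  simpa only [Nat.add_sub_cancel] using (Commute.all a b).mul_neg_geom_sum₂ (m + 1)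

lemma sub_mul_neg_pow_add_sub_mul_geom_sum₂ (a b c : R) (m : ℕ) :
    (b - a) * (-(a ^ (m + 1)) + (c - b) * ∑ p ∈ range (m + 1), a ^ p * b ^ (m - p))
      = b ^ (m + 1) * (c - b) - a ^ (m + 1) * (c - a) := by
  linear_combination (c - b) * sub_mul_geom_sum₂_succ a b m

end GeomSum

lemma sub_mul_add_theta_swap {R : Type*} [CommRing R] {N : ℕ} (u : Fin N → R)
    (r : Fin N → Fin N → R) (hr : ∀ i j, r i j = r j i)
    (v : Fin N → Fin N → R) (hv : ∀ i j, v i j = (u j - u i) * r i j)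
    (θ : Fin N → Fin N → R)
    (hθ : ∀ i j, i ≠ j → (u j - u i) * θ i j = r i j + ∑ k, r i k * v j k)
    {i j : Fin N} (hij : i ≠ j) (a b : R) :
    (u j - u i) * (a * θ i j + b * θ j i)
      = r i j * (a - b) + ∑ k, r i k * r j k * (a * (u k - u j) - b * (u k - u i)) := by
  have hθij := hθ i j hij
  have hθji := hθ j i hij.symm
  have hsum : a * ∑ k, r i k * v j k - b * ∑ k, r j k * v i k
      = ∑ k, r i k * r j k * (a * (u k - u j) - b * (u k - u i)) := by
    rw [mul_sum, mul_sum, ← sum_sub_distrib]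
    refine sum_congr rfl fun k _ => ?_
    rw [hv j k, hv i k, hr j k]
    ring
  linear_combination a * hθij - b * hθji + hsum + b * hr i j

/-- Companion identity: `u_j^{m+1} θ_{ij} + u_i^{m+1} θ_{ji}` has no poles. -/
theorem stmt12 {R : Type*} [CommRing R] {N : ℕ}
    (u : Fin N → R) (hinv : ∀ i j, i ≠ j → IsUnit (u i - u j))
    (r : Fin N → Fin N → R) (hr : ∀ i j, r i j = r j i)
    (v : Fin N → Fin N → R) (hv : ∀ i j, v i j = (u j - u i) * r i j)
    (θ : Fin N → Fin N → R)
    (hθ : ∀ i j, i ≠ j → (u j - u i) * θ i j = r i j + ∑ k, r i k * v j k) :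
    ∀ (m : ℕ) (i j : Fin N), i ≠ j →
      u j ^ (m + 1) * θ i j + u i ^ (m + 1) * θ j i
        = r i j * (∑ p ∈ Finset.range (m + 1), u i ^ p * u j ^ (m - p))
          + ∑ k, r i k * r j k *
              (-(u i ^ (m + 1)) + (u k - u j) * ∑ p ∈ Finset.range (m + 1), u i ^ p * u j ^ (m - p)) := by
  intro m i j hij
  apply (hinv j i hij.symm).mul_left_cancel
  rw [sub_mul_add_theta_swap u r hr v hv θ hθ hij, mul_add, mul_left_comm,
    sub_mul_geom_sum₂_succ, mul_sum]
  congr 1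
  refine sum_congr rfl fun k _ => ?_
  rw [mul_left_comm, sub_mul_neg_pow_add_sub_mul_geom_sum₂]
end
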